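/- arXiv:1710.05239 — 2 statements merged into one kernel-verified Lean document; each statement's English description precedes it below -/
import Mathlib

section
/- Consider finitely many nodes indexed by k ∈ K, each with a strictly increasing continuous delay function D_k : [0, x] → ℝ, and a total task rate x > 0 to be split as nonnegative rates (λ_k) with Σ_k λ_k = x. If there exists a feasible allocation (λ*_k) such that D_k(λ*_k) = u* for all k (all delays are equal), then (λ*_k) is the unique minimizer of the objective max_k D_k(λ_k) over all feasible allocations, and the minimum value is u*. -/
open Finset

lemma mem_icc_of_feasible {K : Type*} [Fintype K] {x : ℝ} (l : K → ℝ)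
    (hnn : ∀ k, 0 ≤ l k) (hsum : ∑ k, l k = x) (k : K) : l k ∈ Set.Icc 0 x := by
  refine ⟨hnn k, ?_⟩
  calc l k ≤ ∑ i, l i := Finset.single_le_sum (fun i _ => hnn i) (mem_univ k)
    _ = x := hsum

/-- Equal-delay optimality (Theorem 1): with finitely many nodes each having a strictly
increasing continuous delay function on `[0, x]`, if a feasible allocation `l⋆`
(nonnegative, summing to `x`) equalizes all delays at `u⋆`, then `l⋆` is the unique
minimizer of the max-delay objective, with minimum value `u⋆`. -/
theorem equal_delay_unique_optimal {K : Type*} [Fintype K] [Nonempty K]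
    (x : ℝ) (hx : 0 < x) (D : K → ℝ → ℝ)
    (hmono : ∀ k, StrictMonoOn (D k) (Set.Icc 0 x))
    (hcont : ∀ k, ContinuousOn (D k) (Set.Icc 0 x))
    (lstar : K → ℝ) (hstar_nonneg : ∀ k, 0 ≤ lstar k)
    (hstar_sum : ∑ k, lstar k = x)
    (ustar : ℝ) (hequal : ∀ k, D k (lstar k) = ustar) :
    (∀ l : K → ℝ, (∀ k, 0 ≤ l k) → ∑ k, l k = x →
        ustar ≤ univ.sup' univ_nonempty (fun k => D k (l k))) ∧
    (univ.sup' univ_nonempty (fun k => D k (lstar k)) = ustar) ∧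
    (∀ l : K → ℝ, (∀ k, 0 ≤ l k) → ∑ k, l k = x →
        univ.sup' univ_nonempty (fun k => D k (l k)) = ustar → l = lstar) := by
  have hstar_mem : ∀ k, lstar k ∈ Set.Icc 0 x :=
    mem_icc_of_feasible lstar hstar_nonneg hstar_sum
  -- key: if D k (l k) ≤ ustar then l k ≤ lstar k
  have key : ∀ (l : K → ℝ), (∀ k, 0 ≤ l k) → ∑ k, l k = x →
      ∀ k, D k (l k) ≤ ustar → l k ≤ lstar k := by
    intro l hnn hsum k hle
    by_contra h
    push_neg at h
    have := hmono k (hstar_mem k) (mem_icc_of_feasible l hnn hsum k) h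
    rw [hequal k] at this
    linarith
  constructor
  · intro l hnn hsum
    by_contra h
    push_neg at h
    have hlt : ∀ k, l k < lstar k := by
      intro k
      have hle : D k (l k) ≤ ustar :=
        le_of_lt (lt_of_le_of_lt (Finset.le_sup' (fun i => D i (l i)) (mem_univ k)) h)
      rcases lt_or_eq_of_le (key l hnn hsum k hle) with h' | h'
      · exact h'
      · exfalso
        have := Finset.le_sup' (fun i => D i (l i)) (mem_univ k)
        rw [h', hequal k] at this
        exact absurd (lt_of_le_of_lt this h) (lt_irrefl _)
    have : ∑ k, l k < ∑ k, lstar k :=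
      Finset.sum_lt_sum_of_nonempty univ_nonempty (fun k _ => hlt k)
    rw [hsum, hstar_sum] at this
    exact lt_irrefl _ this
  refine ⟨?_, ?_⟩
  · apply le_antisymm
    · exact Finset.sup'_le _ _ (fun k _ => le_of_eq (hequal k))
    · obtain ⟨k⟩ := ‹Nonempty K›
      calc ustar = D k (lstar k) := (hequal k).symm
        _ ≤ _ := Finset.le_sup' (fun i => D i (lstar i)) (mem_univ k)
  · intro l hnn hsum hmax
    have hle : ∀ k, l k ≤ lstar k := by
      intro k
      refine key l hnn hsum k ?_
      rw [← hmax]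
      exact Finset.le_sup' (fun i => D i (l i)) (mem_univ k)
    funext k
    by_contra h
    have hlt : l k < lstar k := lt_of_le_of_ne (hle k) h
    have : ∑ i, l i < ∑ i, lstar i :=
      Finset.sum_lt_sum (fun i _ => hle i) ⟨k, mem_univ k, hlt⟩
    rw [hsum, hstar_sum] at this
    exact lt_irrefl _ this
end

section
/- For total bandwidth B > 0 and constant c > 0, the per-node service rate μ(J) = (B/((J+1)K))·log₂(1 + c(J+1)/B) as a function of the number of neighbors J ∈ ℕ is strictly decreasing in J. -/
/-!
With the signal-to-noise ratio `x = c (J + 1) / B`, which grows with `J`, the rate is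
`(c / K) · log₂ (1 + x) / x`, and `log (1 + x) / x` is the slope of a secant of the strictly
concave `log` through `1`, hence strictly decreasing in `x`.
-/

open Real Set

/-- The secant slope of the strictly concave `log` through `1` decreases. -/
theorem strictAntiOn_log_one_add_div_self :
    StrictAntiOn (fun x : ℝ => log (1 + x) / x) (Ioi 0) := by
  intro x (hx : 0 < x) y (hy : 0 < y) hxy
  have hslope := strictConcaveOn_log_Ioi.secant_strict_mono (a := 1) (mem_Ioi.2 one_pos)
    (mem_Ioi.2 (by linarith : 0 < 1 + x)) (mem_Ioi.2 (by linarith : 0 < 1 + y))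
    (by linarith) (by linarith) (by linarith : 1 + x < 1 + y)
  simpa only [log_one, sub_zero, add_sub_cancel_left] using hslope

theorem strictAntiOn_logb_one_add_div_self {b : ℝ} (hb : 1 < b) :
    StrictAntiOn (fun x : ℝ => logb b (1 + x) / x) (Ioi 0) := by
  intro x hx y hy hxy
  simp only [logb, div_right_comm _ (log b)]
  exact div_lt_div_of_pos_right (strictAntiOn_log_one_add_div_self hx hy hxy) (log_pos hb)

/-- For total bandwidth `B > 0` and constants `c, K > 0`, the per-node service rate
`μ(J) = (B/((J+1)K))·log₂(1 + c(J+1)/B)` is strictly decreasing in the number of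
neighbors `J ∈ ℕ`. -/
theorem per_node_rate_strictAnti (B c K : ℝ) (hB : 0 < B) (hc : 0 < c) (hK : 0 < K) :
    StrictAnti (fun J : ℕ =>
      (B / (((J : ℝ) + 1) * K)) * Real.logb 2 (1 + c * ((J : ℝ) + 1) / B)) := by
  set snr : ℕ → ℝ := fun J => c * ((J : ℝ) + 1) / B
  have hsnr_pos (J : ℕ) : snr J ∈ Ioi 0 := by simp only [snr, mem_Ioi]; positivity
  have hsnr_mono : StrictMono snr := fun m n hmn => by simp only [snr]; gcongr
  have hrate (J : ℕ) : B / (((J : ℝ) + 1) * K) * logb 2 (1 + c * ((J : ℝ) + 1) / B)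
      = c / K * (logb 2 (1 + snr J) / snr J) := by
    simp only [snr]
    field_simp
  intro m n hmn
  dsimp only
  rw [hrate, hrate]
  exact mul_lt_mul_of_pos_left
    (strictAntiOn_logb_one_add_div_self one_lt_two (hsnr_pos m) (hsnr_pos n) (hsnr_mono hmn))
    (by positivity)
end
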